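/- Let M = [a,b) and N = [c,d) be interval modules with 0 ≤ a ≤ c < b ≤ d, a < b, c < d (overlapping supports, neither contained in the other). Then S_{M,N} = [max{c−a, d−b}, d−a) and S_{N,M} = [0, b−c). -/

import Mathlib

open scoped NNReal

/-- A persistence module: a functor from `[0,∞)` to real vector spaces. -/
structure PM where
  V : ℝ≥0 → Type
  [grp : ∀ x, AddCommGroup (V x)]
  [mod : ∀ x, Module ℝ (V x)]
  map : ∀ {x y : ℝ≥0}, x ≤ y → (V x →ₗ[ℝ] V y)
  map_id : ∀ x : ℝ≥0, map (le_refl x) = LinearMap.id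
  map_comp : ∀ {x y z : ℝ≥0} (h1 : x ≤ y) (h2 : y ≤ z),
    (map h2).comp (map h1) = map (h1.trans h2)

attribute [instance] PM.grp PM.mod

/-- A morphism of persistence modules. -/
structure PM.Hom (M N : PM) where
  app : ∀ x : ℝ≥0, M.V x →ₗ[ℝ] N.V x
  comm : ∀ {x y : ℝ≥0} (h : x ≤ y), (app y).comp (M.map h) = (N.map h).comp (app x)

/-- The shifted module `M·ε`. -/
def PM.shift (M : PM) (ε : ℝ≥0) : PM where
  V x := M.V (x + ε)
  grp x := inferInstance
  mod x := inferInstance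
  map h := M.map (add_le_add_left h ε)
  map_id x := M.map_id (x + ε)
  map_comp h1 h2 := M.map_comp _ _

noncomputable def intervalSub (α β : ℝ) (x : ℝ≥0) : Submodule ℝ ℝ :=
  if α ≤ (x : ℝ) ∧ (x : ℝ) < β then ⊤ else ⊥

/-- The interval module `[α,β)`. -/
noncomputable def intervalModule (α β : ℝ) : PM where
  V x := ↥(intervalSub α β x)
  grp x := inferInstance
  mod x := inferInstance
  map {x y} h := LinearMap.codRestrict _
      ((if α ≤ (x : ℝ) ∧ (y : ℝ) < β then (1 : ℝ) else 0) • (intervalSub α β x).subtype)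
      (by
        intro v
        by_cases hy : α ≤ (y : ℝ) ∧ (y : ℝ) < β
        · simp [intervalSub, hy]
        · have hc : ¬(α ≤ (x : ℝ) ∧ (y : ℝ) < β) := by
            intro hc
            exact hy ⟨le_trans hc.1 (by exact_mod_cast h), hc.2⟩
          simp only [if_neg hc, zero_smul, LinearMap.zero_apply, Submodule.zero_mem])
  map_id x := by
    ext v
    by_cases hx : α ≤ (x : ℝ) ∧ (x : ℝ) < β
    · simp [hx]
    · have hv : (v : ℝ) = 0 := by
        have h2 := v.2
        simp only [intervalSub, if_neg hx, Submodule.mem_bot] at h2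
        exact h2
      simp [hx, hv]
  map_comp {x y z} h1 h2 := by
    ext v
    by_cases hC : α ≤ (x : ℝ) ∧ (z : ℝ) < β
    · have hA : α ≤ (x : ℝ) ∧ (y : ℝ) < β :=
        ⟨hC.1, lt_of_le_of_lt (by exact_mod_cast h2) hC.2⟩
      have hB : α ≤ (y : ℝ) ∧ (z : ℝ) < β :=
        ⟨le_trans hC.1 (by exact_mod_cast h1), hC.2⟩
      simp [hA, hB, hC]
    · rcases not_and_or.mp hC with hx | hz
      · have hA : ¬(α ≤ (x : ℝ) ∧ (y : ℝ) < β) := fun h => hx h.1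
        simp [hA, hC]
        split_ifs <;> simp
      · have hB : ¬(α ≤ (y : ℝ) ∧ (z : ℝ) < β) := fun h => hz h.2
        simp [hB, hC]

/-- `Hom(M,N) ≠ {0}`: there is a nonzero morphism from `M` to `N`. -/
def HomNeZero (M N : PM) : Prop := ∃ F : PM.Hom M N, ∃ x, F.app x ≠ 0

/-- `S_{M,N} = {x ≥ 0 : Hom(M, N·x) ≠ {0}}`. -/
noncomputable def Sset (M N : PM) : Set ℝ :=
  {x : ℝ | 0 ≤ x ∧ HomNeZero M (N.shift x.toNNReal)}

/-- The canonical morphism `Π_M^{M·τ} : M → M·τ`. -/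
def PM.pi (M : PM) (τ : ℝ≥0) : M.Hom (M.shift τ) where
  app x := M.map le_self_add
  comm {x y} h := by
    show (M.map le_self_add).comp (M.map h) =
      (M.map (add_le_add_left h τ)).comp (M.map le_self_add)
    rw [M.map_comp, M.map_comp]

/-- The pair `(Φ, Ψ)` is an `ε`-interleaving between `M` and `N`:
`(Ψ·ε) ∘ Φ = Π_M^{M·2ε}` and `(Φ·ε) ∘ Ψ = Π_N^{N·2ε}` (expressed pointwise). -/
def IsInterleaving (M N : PM) (ε : ℝ≥0)
    (Φ : M.Hom (N.shift ε)) (Ψ : N.Hom (M.shift ε)) : Prop :=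
  (∀ x : ℝ≥0, (Ψ.app (x + ε)).comp (Φ.app x) =
      M.map (le_self_add.trans le_self_add : x ≤ x + ε + ε)) ∧
  (∀ x : ℝ≥0, (Φ.app (x + ε)).comp (Ψ.app x) =
      N.map (le_self_add.trans le_self_add : x ≤ x + ε + ε))

/-!
A nonzero morphism `[α,β) → [γ,δ)·ε` exists iff `γ ≤ α + ε < δ ≤ β + ε`. If these inequalities
hold, multiplication by the indicator of `x + ε ∈ [γ,δ)` is natural and nonzero at time `α`.
Conversely, if `F x v ≠ 0`, then `v` is the image of a vector at time `α`, where the target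
vanishes unless `γ ≤ α + ε`, and `v` dies at time `β`, where its image survives unless
`δ ≤ β + ε`. Both sets `S` are then obtained by solving these inequalities for `ε`.
-/
lemma PM.Hom.app_map {M N : PM} (F : M.Hom N) {x y : ℝ≥0} (h : x ≤ y) (v : M.V x) :
    F.app y (M.map h v) = N.map h (F.app x v) :=
  LinearMap.congr_fun (F.comm h) v

namespace intervalModule

variable {α β : ℝ} {x y : ℝ≥0}

lemma mem_intervalSub (hx : (x : ℝ) ∈ Set.Ico α β) (r : ℝ) : r ∈ intervalSub α β x := by
  simp [intervalSub, hx.1, hx.2]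

lemma eq_zero_of_notMem (hx : (x : ℝ) ∉ Set.Ico α β) (v : (intervalModule α β).V x) :
    v = 0 :=
  Submodule.coe_eq_zero.mp <| by
    simpa only [intervalSub, if_neg (Set.mem_Ico.not.mp hx), Submodule.mem_bot] using v.2

lemma mem_Ico_of_ne_zero {v : (intervalModule α β).V x} (hv : v ≠ 0) : (x : ℝ) ∈ Set.Ico α β :=
  not_not.mp (mt eq_zero_of_notMem (fun h => hv (h v)))

lemma map_val (h : x ≤ y) (v : (intervalModule α β).V x) :
    ((intervalModule α β).map h v).1 = if α ≤ x ∧ (y : ℝ) < β then v.1 else 0 := by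
  show (if α ≤ (x : ℝ) ∧ (y : ℝ) < β then (1 : ℝ) else 0) * v.1 = _
  split_ifs <;> simp

lemma map_val_of_mem (h : x ≤ y) (hx : α ≤ x) (hy : (y : ℝ) < β) (v : (intervalModule α β).V x) :
    ((intervalModule α β).map h v).1 = v.1 := by
  rw [map_val, if_pos ⟨hx, hy⟩]

lemma map_eq_zero_of_not_lt (h : x ≤ y) (hy : ¬ (y : ℝ) < β) (v : (intervalModule α β).V x) :
    (intervalModule α β).map h v = 0 :=
  Subtype.ext (by rw [map_val, if_neg (fun h => hy h.2)]; rfl)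

lemma map_injective (h : x ≤ y) (hx : α ≤ x) (hy : (y : ℝ) < β) :
    Function.Injective ((intervalModule α β).map h) := fun v w hvw =>
  Subtype.ext <| by
    rw [← map_val_of_mem h hx hy v, ← map_val_of_mem h hx hy w, hvw]

lemma exists_map_eq (h : x ≤ y) (hx : α ≤ x) (hy : (y : ℝ) < β) (v : (intervalModule α β).V y) :
    ∃ w, (intervalModule α β).map h w = v :=
  ⟨⟨v.1, mem_intervalSub ⟨hx, (NNReal.coe_le_coe.mpr h).trans_lt hy⟩ _⟩,
    Subtype.ext (map_val_of_mem h hx hy _)⟩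

noncomputable def indicatorApp (γ δ : ℝ) (ε x : ℝ≥0) :
    (intervalModule α β).V x →ₗ[ℝ] (intervalModule γ δ).V (x + ε) :=
  LinearMap.codRestrict (intervalSub γ δ (x + ε))
    ((if γ ≤ x + ε ∧ (x : ℝ) + ε < δ then (1 : ℝ) else 0) • (intervalSub α β x).subtype)
    (fun v => by
      split_ifs with hx
      · exact mem_intervalSub (by push_cast; exact hx) _
      · rw [zero_smul]; exact (intervalSub γ δ (x + ε)).zero_mem)

variable {γ δ : ℝ} {ε : ℝ≥0}

lemma indicatorApp_val (v : (intervalModule α β).V x) :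
    (indicatorApp γ δ ε x v).1 = if γ ≤ x + ε ∧ (x : ℝ) + ε < δ then v.1 else 0 := by
  change (if γ ≤ x + ε ∧ (x : ℝ) + ε < δ then (1 : ℝ) else 0) * v.1 = _
  split_ifs <;> simp

noncomputable def indicatorHom (hγ : γ ≤ α + ε) (hδ : δ ≤ β + ε) :
    (intervalModule α β).Hom ((intervalModule γ δ).shift ε) where
  app := indicatorApp γ δ ε
  comm {x y} h := by
    ext v
    apply Subtype.ext
    by_cases hv : (x : ℝ) ∈ Set.Ico α β
    · obtain ⟨hαx, -⟩ := hv
      have hxy : (x : ℝ) ≤ y := h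
      change (indicatorApp γ δ ε y ((intervalModule α β).map h v)).1 =
        ((intervalModule γ δ).map (add_le_add_left h ε) (indicatorApp γ δ ε x v)).1
      rw [indicatorApp_val, map_val, map_val, indicatorApp_val, ← ite_and, ← ite_and]
      push_cast
      -- given `α ≤ x ≤ y`, both conditions amount to `y + ε < δ`
      refine if_congr ?_ rfl rfl
      constructor
      · rintro ⟨⟨-, hyδ⟩, -, -⟩
        exact ⟨⟨by linarith, hyδ⟩, by linarith, by linarith⟩
      · rintro ⟨⟨-, hyδ⟩, -, -⟩
        exact ⟨⟨by linarith, hyδ⟩, hαx, by linarith⟩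
    · simp [eq_zero_of_notMem hv v]

lemma indicatorHom_app_ne_zero (hα : 0 ≤ α) (hγ : γ ≤ α + ε) (hαδ : α + ε < δ) (hδ : δ ≤ β + ε) :
    (indicatorHom hγ hδ).app α.toNNReal ≠ 0 := by
  have hα' : (α.toNNReal : ℝ) = α := Real.coe_toNNReal α hα
  have hmem : (α.toNNReal : ℝ) ∈ Set.Ico α β := by
    rw [hα']; exact ⟨le_rfl, by linarith⟩
  let one : (intervalModule α β).V α.toNNReal := ⟨1, mem_intervalSub hmem 1⟩
  have h1 : (indicatorApp γ δ ε α.toNNReal one).1 = 1 := by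
    rw [indicatorApp_val, hα', if_pos ⟨hγ, hαδ⟩]
  exact fun h0 => one_ne_zero (h1.symm.trans (congrArg Subtype.val (LinearMap.congr_fun h0 _)))

lemma bounds_of_homNeZero (hα : 0 ≤ α)
    (hF : HomNeZero (intervalModule α β) ((intervalModule γ δ).shift ε)) :
    γ ≤ α + ε ∧ α + ε < δ ∧ δ ≤ β + ε := by
  obtain ⟨F, x, hFx⟩ := hF
  obtain ⟨v, hv⟩ : ∃ v, F.app x v ≠ 0 := not_forall.mp fun h => hFx (LinearMap.ext h)
  obtain ⟨hαx, hxβ⟩ : (x : ℝ) ∈ Set.Ico α β :=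
    mem_Ico_of_ne_zero (v := v) fun h0 => hv (by rw [h0, map_zero])
  obtain ⟨hγx, hxδ⟩ : (x : ℝ) + ε ∈ Set.Ico γ δ := by exact_mod_cast mem_Ico_of_ne_zero hv
  have hα' : (α.toNNReal : ℝ) = α := Real.coe_toNNReal α hα
  have hβ' : (β.toNNReal : ℝ) = β := Real.coe_toNNReal β (by linarith [x.2])
  refine ⟨?_, by linarith, ?_⟩
  · -- `v` comes from time `α`, where the target vanishes
    by_contra! hlt
    have hαx' : α.toNNReal ≤ x := by rw [← NNReal.coe_le_coe, hα']; exact hαx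
    obtain ⟨w, rfl⟩ := exists_map_eq hαx' hα'.ge hxβ v
    have hw : F.app α.toNNReal w = 0 :=
      eq_zero_of_notMem (by push_cast; exact fun h => by linarith [h.1]) _
    exact hv (by rw [F.app_map, hw, map_zero])
  · -- `v` dies at time `β`, where its image is still alive
    by_contra! hlt
    have hxβ' : x ≤ β.toNNReal := by rw [← NNReal.coe_le_coe, hβ']; exact hxβ.le
    have h0 := F.app_map hxβ' v
    rw [map_eq_zero_of_not_lt hxβ' (by rw [hβ']; exact lt_irrefl β), map_zero] at h0
    refine hv (map_injective (add_le_add_left hxβ' ε) ?_ ?_ (h0.symm.trans (map_zero _).symm))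
    · exact_mod_cast hγx
    · push_cast; linarith

theorem homNeZero_shift_iff (hα : 0 ≤ α) :
    HomNeZero (intervalModule α β) ((intervalModule γ δ).shift ε) ↔
      γ ≤ α + ε ∧ α + ε < δ ∧ δ ≤ β + ε :=
  ⟨bounds_of_homNeZero hα, fun ⟨hγ, hαδ, hδ⟩ =>
    ⟨indicatorHom hγ hδ, α.toNNReal, indicatorHom_app_ne_zero hα hγ hαδ hδ⟩⟩

end intervalModule

lemma mem_Sset_intervalModule_iff {α β γ δ ε : ℝ} (hα : 0 ≤ α) :
    ε ∈ Sset (intervalModule α β) (intervalModule γ δ) ↔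
      0 ≤ ε ∧ γ ≤ α + ε ∧ α + ε < δ ∧ δ ≤ β + ε := by
  refine and_congr_right fun hε => ?_
  rw [intervalModule.homNeZero_shift_iff hα, Real.coe_toNNReal ε hε]

theorem stmt16_general (a b c d : ℝ) (ha : 0 ≤ a) (hac : a ≤ c) (hbd : b ≤ d) :
    Sset (intervalModule a b) (intervalModule c d) = Set.Ico (max (c - a) (d - b)) (d - a) ∧
    Sset (intervalModule c d) (intervalModule a b) = Set.Ico 0 (b - c) := by
  constructor <;> ext ε
  · rw [mem_Sset_intervalModule_iff ha, Set.mem_Ico, max_le_iff]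
    constructor
    · rintro ⟨-, h₁, h₂, h₃⟩
      exact ⟨⟨by linarith, by linarith⟩, by linarith⟩
    · rintro ⟨⟨h₁, h₂⟩, h₃⟩
      exact ⟨by linarith, by linarith, by linarith, by linarith⟩
  · rw [mem_Sset_intervalModule_iff (ha.trans hac), Set.mem_Ico]
    constructor
    · rintro ⟨h₀, -, h₂, -⟩
      exact ⟨h₀, by linarith⟩
    · rintro ⟨h₀, h₂⟩
      exact ⟨h₀, by linarith, by linarith, by linarith⟩

theorem stmt16 (a b c d : ℝ) (ha : 0 ≤ a) (hac : a ≤ c) (hcb : c < b) (hbd : b ≤ d)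
    (hab : a < b) (hcd : c < d) :
    Sset (intervalModule a b) (intervalModule c d) = Set.Ico (max (c - a) (d - b)) (d - a) ∧
    Sset (intervalModule c d) (intervalModule a b) = Set.Ico 0 (b - c) :=
  stmt16_general a b c d ha hac hbd
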